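/- arXiv:2110.04989 — 3 statements merged into one kernel-verified Lean document; each statement's English description precedes it below -/
import Mathlib

section
/- (Little Picard theorem.) Let f : ℂ → ℂ be an entire (everywhere complex differentiable) function which is not constant. Then the complement ℂ \ f(ℂ) of the range of f contains at most one point. -/
open Metric Set Complex FormalMultilinearSeries

/-- An entire function has an entire primitive. -/
lemma entire_exists_primitive (φ : ℂ → ℂ) (hφ : Differentiable ℂ φ) :
    ∃ F : ℂ → ℂ, Differentiable ℂ F ∧ ∀ z, deriv F z = φ z := by
  classical
  set a : ℕ → ℂ := fun n => (n.factorial : ℂ)⁻¹ * iteratedDeriv n φ 0 with ha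
  have hsum : ∀ z : ℂ, HasSum (fun n => a n * z ^ n) (φ z) := by
    intro z
    have := Complex.hasSum_taylorSeries_of_entire hφ 0 z
    simp only [sub_zero, smul_eq_mul] at this
    convert this using 2 with n
    · rfl
    simp only [ha]
    ring
  set b : ℕ → ℂ := fun n => if n = 0 then 0 else a (n - 1) / n with hb
  set q : FormalMultilinearSeries ℂ ℂ ℂ := FormalMultilinearSeries.ofScalars ℂ b with hq
  have hqn : ∀ n, ‖q n‖ = ‖b n‖ := fun n => FormalMultilinearSeries.ofScalars_norm ℂ b n
  have hrad : q.radius = ⊤ := by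
    refine ENNReal.eq_top_of_forall_nnreal_le (fun r => ?_)
    obtain ⟨C, hC0, hC⟩ : ∃ C, 0 ≤ C ∧ ∀ n, ‖a n‖ * (r : ℝ) ^ n ≤ C := by
      have hs := (hsum (r : ℂ)).summable
      have ht := hs.tendsto_atTop_zero.norm
      have hbdd := ht.bddAbove_range
      obtain ⟨C, hC⟩ := hbdd
      refine ⟨C, le_trans (norm_nonneg _) (hC ⟨0, rfl⟩), fun n => ?_⟩
      have := hC ⟨n, rfl⟩
      simpa [norm_mul, norm_pow, Complex.norm_real] using this
    refine q.le_radius_of_bound (C * r) (fun n => ?_)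
    rw [hqn]
    cases n with
    | zero => simpa [hb] using mul_nonneg hC0 r.2
    | succ n =>
      have hbn : ‖b (n + 1)‖ ≤ ‖a n‖ := by
        simp only [hb, if_neg (Nat.succ_ne_zero n), Nat.add_sub_cancel]
        rw [norm_div]
        refine div_le_self (norm_nonneg _) ?_
        rw [Complex.norm_natCast]
        exact_mod_cast Nat.one_le_iff_ne_zero.2 (Nat.succ_ne_zero n)
      calc ‖b (n + 1)‖ * (r : ℝ) ^ (n + 1) ≤ ‖a n‖ * ((r : ℝ) ^ n * r) := by
            rw [pow_succ]
            exact mul_le_mul hbn le_rfl (by positivity) (norm_nonneg _)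
        _ = ‖a n‖ * (r : ℝ) ^ n * r := by ring
        _ ≤ C * r := mul_le_mul_of_nonneg_right (hC n) r.2
  set F : ℂ → ℂ := q.sum with hF
  have hball : HasFPowerSeriesOnBall F q 0 ⊤ := by
    have := q.hasFPowerSeriesOnBall (by rw [hrad]; exact ENNReal.zero_lt_top)
    rwa [hrad] at this
  have hmem : ∀ z : ℂ, z ∈ EMetric.ball (0 : ℂ) ⊤ := by
    intro z; exact Metric.mem_eball.mpr (edist_lt_top _ _)
  have hFdiff : Differentiable ℂ F := by
    have := hball.differentiableOn
    rw [show Metric.eball (0 : ℂ) ⊤ = univ from Set.eq_univ_of_forall hmem] at this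
    exact differentiableOn_univ.mp this
  have hfd : HasFPowerSeriesOnBall (fderiv ℂ F) q.derivSeries 0 ⊤ := hball.fderiv
  have hds : ∀ z : ℂ, HasSum (fun n => q.derivSeries n fun _ => z) (fderiv ℂ F z) := by
    intro z
    have := hfd.hasSum (hmem z)
    simpa using this
  have heval : ∀ z : ℂ, HasSum (fun n => (q.derivSeries n fun _ => z) 1) (deriv F z) := by
    intro z
    have h2 := (ContinuousLinearMap.apply ℂ ℂ (1 : ℂ)).hasSum (hds z)
    simpa [fderiv_apply_one_eq_deriv] using h2
  have hkey : ∀ z : ℂ, z ≠ 0 → deriv F z = φ z := by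
    intro z hz
    have h1 := heval z
    have hfun : (fun n => (q.derivSeries n fun _ => z) 1) = fun n => a n * z ^ n := by
      funext n
      set L : ℂ →L[ℂ] ℂ := q.derivSeries n fun _ => z with hL
      have hdiag : L z = ((n + 1) : ℕ) • (q (n + 1) fun _ => z) :=
        q.derivSeries_apply_diag n z
      have hq1 : (q (n + 1) fun _ => z) = b (n + 1) • z ^ (n + 1) :=
        FormalMultilinearSeries.ofScalars_apply_eq b z (n + 1)
      have hLz : L z = z • L 1 := by
        have : L (z • (1 : ℂ)) = z • L 1 := L.map_smul z 1
        simpa using this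
      have hnne : ((n : ℂ) + 1) ≠ 0 := Nat.cast_add_one_ne_zero n
      have hb1 : b (n + 1) = a n / ((n : ℂ) + 1) := by
        simp [hb]
      have : z • L 1 = ((n : ℂ) + 1) * (a n / ((n : ℂ) + 1)) * z ^ (n + 1) := by
        rw [← hLz, hdiag, hq1, hb1]
        simp [smul_eq_mul]
        ring
      rw [mul_div_cancel₀ _ hnne] at this
      have hz1 : L 1 = a n * z ^ (n + 1) / z := by
        field_simp at this ⊢
        linear_combination this
      rw [hz1, pow_succ, mul_div_assoc, mul_div_cancel_right₀ _ hz]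
    rw [hfun] at h1
    exact h1.unique (hsum z)
  have hcont1 : Continuous (deriv F) := by
    have hdf : Differentiable ℂ (fderiv ℂ F) := by
      have := hfd.differentiableOn
      rw [show Metric.eball (0 : ℂ) ⊤ = univ from Set.eq_univ_of_forall hmem] at this
      exact differentiableOn_univ.mp this
    have hc : Continuous fun z => fderiv ℂ F z 1 :=
      (ContinuousLinearMap.apply ℂ ℂ (1 : ℂ)).continuous.comp hdf.continuous
    simpa [fderiv_apply_one_eq_deriv] using hc
  have heq : deriv F = φ := by
    refine Continuous.ext_on (dense_compl_singleton (0 : ℂ)) hcont1 hφ.continuous ?_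
    intro z hz
    exact hkey z hz
  exact ⟨F, hFdiff, fun z => by rw [heq]⟩
/-- An entire function is analytic on ℂ. -/
lemma entire_analyticOnNhd {u : ℂ → ℂ} (hu : Differentiable ℂ u) :
    AnalyticOnNhd ℂ u Set.univ := fun z _ => hu.analyticAt z

/-- The derivative of an entire function is entire. -/
lemma entire_deriv {u : ℂ → ℂ} (hu : Differentiable ℂ u) : Differentiable ℂ (deriv u) := by
  have := (entire_analyticOnNhd hu).deriv
  exact differentiableOn_univ.mp (this.differentiableOn)

/-- A nonvanishing entire function has an entire logarithm. -/
lemma entire_exists_log {u : ℂ → ℂ} (hu : Differentiable ℂ u) (hu0 : ∀ z, u z ≠ 0) :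
    ∃ v : ℂ → ℂ, Differentiable ℂ v ∧ ∀ z, u z = Complex.exp (v z) := by
  obtain ⟨F, hFd, hF⟩ := entire_exists_primitive (fun z => deriv u z / u z)
    ((entire_deriv hu).div hu hu0)
  have hG : ∀ z, HasDerivAt (fun w => u w * Complex.exp (-F w)) 0 z := by
    intro z
    have h1 : HasDerivAt u (deriv u z) z := (hu z).hasDerivAt
    have h2 : HasDerivAt (fun w => -F w) (-deriv F z) z := ((hFd z).hasDerivAt).neg
    have h3 : HasDerivAt (fun w => Complex.exp (-F w))
        (Complex.exp (-F z) * -deriv F z) z := h2.cexp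
    have h4 := h1.mul h3
    refine h4.congr_deriv ?_
    rw [hF z]
    field_simp [hu0 z]
    ring
  have hconst : ∀ z, u z * Complex.exp (-F z) = u 0 * Complex.exp (-F 0) := by
    intro z
    have hd : Differentiable ℂ fun w => u w * Complex.exp (-F w) :=
      fun w => ((hG w).differentiableAt)
    exact is_const_of_deriv_eq_zero hd (fun w => (hG w).deriv) z 0
  set c := u 0 * Complex.exp (-F 0) with hc
  have hc0 : c ≠ 0 := mul_ne_zero (hu0 0) (Complex.exp_ne_zero _)
  refine ⟨fun z => F z + Complex.log c, hFd.add_const _, fun z => ?_⟩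
  rw [Complex.exp_add, Complex.exp_log hc0]
  have := hconst z
  have he : Complex.exp (-F z) * Complex.exp (F z) = 1 := by
    rw [← Complex.exp_add]; simp
  calc u z = u z * (Complex.exp (-F z) * Complex.exp (F z)) := by rw [he]; ring
    _ = (u z * Complex.exp (-F z)) * Complex.exp (F z) := by ring
    _ = Complex.exp (F z) * c := by rw [this]; ring

/-- A nonvanishing entire function has an entire square root. -/
lemma entire_exists_sqrt {u : ℂ → ℂ} (hu : Differentiable ℂ u) (hu0 : ∀ z, u z ≠ 0) :
    ∃ w : ℂ → ℂ, Differentiable ℂ w ∧ ∀ z, w z ^ 2 = u z := by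
  obtain ⟨v, hvd, hv⟩ := entire_exists_log hu hu0
  refine ⟨fun z => Complex.exp (v z / 2), Complex.differentiable_exp.comp (hvd.div_const 2),
    fun z => ?_⟩
  rw [← Complex.exp_nat_mul, hv z]
  norm_num
  rw [mul_div_cancel₀ _ (two_ne_zero)]
/-- For a continuous linear map `ℂ →L[ℂ] ℂ`, the operator norm equals `‖L 1‖`. -/
lemma clm_norm_eq_norm_one (L : ℂ →L[ℂ] ℂ) : ‖L‖ = ‖L 1‖ := by
  refine le_antisymm ?_ ?_
  · refine L.opNorm_le_bound (norm_nonneg _) (fun z => ?_)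
    have : L z = z • L 1 := by
      have := L.map_smul z (1 : ℂ)
      simpa using this
    rw [this, norm_smul, mul_comm]
  · simpa using L.le_opNorm 1

lemma norm_fderiv_eq_norm_deriv (f : ℂ → ℂ) (z : ℂ) : ‖fderiv ℂ f z‖ = ‖deriv f z‖ := by
  rw [clm_norm_eq_norm_one (fderiv ℂ f z), fderiv_apply_one_eq_deriv]

/-- Key Landau-type lemma: if an entire function has derivative of norm `μ > 0` at `p` and
its derivative is bounded by `2μ` on `ball p r`, then the range of `g` contains
`ball (g p) (μ * r / 32)`. -/
lemma bloch_key {g : ℂ → ℂ} (hg : Differentiable ℂ g) {p : ℂ} {r μ : ℝ}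
    (hr : 0 < r) (hμ : ‖deriv g p‖ = μ) (hμ0 : 0 < μ)
    (hb : ∀ z ∈ Metric.ball p r, ‖deriv g z‖ ≤ 2 * μ) :
    Metric.ball (g p) (μ * r / 32) ⊆ Set.range g := by
  have hgd := entire_deriv hg
  -- Schwarz estimate on the derivative
  have schwarz : ∀ z ∈ Metric.ball p r, ‖deriv g z - deriv g p‖ ≤ 4 * μ / r * dist z p := by
    intro z hz
    set ψ : ℂ → ℂ := fun w => deriv g w - deriv g p with hψ
    have hψd : DifferentiableOn ℂ ψ (Metric.ball p r) :=
      (hgd.sub_const _).differentiableOn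
    have hmaps : Set.MapsTo ψ (Metric.ball p r) (Metric.ball (ψ p) (4 * μ)) := by
      intro w hw
      simp only [hψ, sub_self, Metric.mem_ball, dist_eq_norm, sub_zero]
      calc ‖deriv g w - deriv g p‖ ≤ ‖deriv g w‖ + ‖deriv g p‖ := norm_sub_le _ _
        _ ≤ 2 * μ + μ := add_le_add (hb w hw) (le_of_eq hμ)
        _ < 4 * μ := by linarith
    have := Complex.dist_le_div_mul_dist_of_mapsTo_ball hψd (hmaps.mono_right Metric.ball_subset_closedBall) hz
    simpa [hψ, dist_eq_norm] using this
  -- main estimate: g is close to its linearization on the ball of radius r/8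
  set ρ : ℝ := r / 8 with hρ
  have hρ0 : 0 < ρ := by positivity
  have hρr : ρ < r := by rw [hρ]; linarith
  have key : ∀ z ∈ Metric.closedBall p ρ,
      ‖g z - g p - (z - p) * deriv g p‖ ≤ 4 * μ / r * ρ * ‖z - p‖ := by
    intro z hz
    set G : ℂ → ℂ := fun w => g w - w * deriv g p with hG
    have hGd : ∀ x ∈ Metric.closedBall p ρ, DifferentiableAt ℂ G x := by
      intro x _
      exact (hg x).sub ((differentiableAt_id.mul_const _))
    have hGderiv : ∀ x, deriv G x = deriv g x - deriv g p := by
      intro x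
      have h1 : HasDerivAt G (deriv g x - deriv g p) x := by
        refine ((hg x).hasDerivAt.sub ((hasDerivAt_id x).mul_const (deriv g p))).congr_deriv ?_
        simp
      exact h1.deriv
    have hbound : ∀ x ∈ Metric.closedBall p ρ, ‖fderiv ℂ G x‖ ≤ 4 * μ / r * ρ := by
      intro x hx
      rw [norm_fderiv_eq_norm_deriv, hGderiv]
      have hx' : x ∈ Metric.ball p r := lt_of_le_of_lt (Metric.mem_closedBall.mp hx) hρr
      refine (schwarz x hx').trans ?_
      have : dist x p ≤ ρ := Metric.mem_closedBall.mp hx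
      have h4 : 0 ≤ 4 * μ / r := by positivity
      exact mul_le_mul_of_nonneg_left this h4
    have := (convex_closedBall p ρ).norm_image_sub_le_of_norm_fderiv_le hGd hbound
      (Metric.mem_closedBall_self hρ0.le) hz
    have heq : G z - G p = g z - g p - (z - p) * deriv g p := by rw [hG]; ring
    rw [heq] at this
    simpa [dist_eq_norm] using this
  -- lower bound on the sphere
  have sphere_bound : ∀ z ∈ Metric.sphere p ρ, μ * r / 16 ≤ ‖g z - g p‖ := by
    intro z hz
    have hzp : ‖z - p‖ = ρ := by
      simpa [dist_eq_norm] using Metric.mem_sphere.mp hz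
    have h1 := key z (Metric.sphere_subset_closedBall hz)
    have h2 : ‖(z - p) * deriv g p‖ = ρ * μ := by
      rw [norm_mul, hzp, hμ]
    have h3 : ‖(z - p) * deriv g p‖ - ‖g z - g p - (z - p) * deriv g p‖ ≤ ‖g z - g p‖ := by
      have := norm_sub_norm_le ((z - p) * deriv g p) ((z-p) * deriv g p - (g z - g p))
      simp only [sub_sub_cancel] at this
      calc ‖(z - p) * deriv g p‖ - ‖g z - g p - (z - p) * deriv g p‖
          = ‖(z - p) * deriv g p‖ - ‖(z - p) * deriv g p - (g z - g p)‖ := by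
            rw [norm_sub_rev]
        _ ≤ ‖g z - g p‖ := this
    have h4 : 4 * μ / r * ρ * ‖z - p‖ = μ * r / 16 := by
      rw [hzp, hρ]; field_simp; ring
    rw [h4] at h1
    rw [h2] at h3
    have : ρ * μ = μ * r / 8 := by rw [hρ]; ring
    rw [this] at h3
    linarith
  -- minimum modulus argument
  intro w hw
  by_contra hwr
  have hne : ∀ z, g z - w ≠ 0 := by
    intro z h
    exact hwr ⟨z, sub_eq_zero.mp h⟩
  have hμr : (0:ℝ) < μ * r / 32 := by positivity
  set v : ℂ → ℂ := fun z => (g z - w)⁻¹ with hv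
  have hvd : Differentiable ℂ v := fun z => ((hg z).sub_const w).inv (hne z)
  have hgpw : ‖g p - w‖ < μ * r / 32 := by
    have := Metric.mem_ball.mp hw
    rw [dist_comm] at this
    simpa [dist_eq_norm, norm_sub_rev] using this
  have hvb : ∀ z ∈ frontier (Metric.ball p ρ), ‖v z‖ ≤ 32 / (μ * r) := by
    intro z hz
    rw [frontier_ball p hρ0.ne'] at hz
    have h1 := sphere_bound z hz
    have h2 : μ * r / 32 ≤ ‖g z - w‖ := by
      have htri : ‖g z - g p‖ ≤ ‖g z - w‖ + ‖g p - w‖ := by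
        have := norm_sub_le (g z - w) (g p - w)
        calc ‖g z - g p‖ = ‖(g z - w) - (g p - w)‖ := by ring_nf
          _ ≤ ‖g z - w‖ + ‖g p - w‖ := norm_sub_le _ _
      linarith
    calc ‖v z‖ = ‖g z - w‖⁻¹ := by rw [hv, norm_inv]
      _ ≤ (μ * r / 32)⁻¹ := by gcongr
      _ = 32 / (μ * r) := by rw [inv_div]
  have hdc : DiffContOnCl ℂ v (Metric.ball p ρ) := hvd.diffContOnCl
  have hcl : p ∈ closure (Metric.ball p ρ) := subset_closure (Metric.mem_ball_self hρ0)
  have hle := Complex.norm_le_of_forall_mem_frontier_norm_le Metric.isBounded_ball hdc hvb hcl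
  have hgt : 32 / (μ * r) < ‖v p‖ := by
    have h0 : 0 < ‖g p - w‖ := norm_pos_iff.mpr (hne p)
    calc 32 / (μ * r) = (μ * r / 32)⁻¹ := by rw [inv_div]
      _ < ‖g p - w‖⁻¹ := by gcongr
      _ = ‖v p‖ := by rw [hv, norm_inv]
  linarith
/-- An entire function with nonzero derivative somewhere has range containing
balls of arbitrarily large radius. -/
lemma bloch_big {h : ℂ → ℂ} (hh : Differentiable ℂ h) {z₀ : ℂ} (h0 : deriv h z₀ ≠ 0)
    (d : ℝ) : ∃ c : ℂ, Metric.ball c d ⊆ Set.range h := by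
  have hgd := entire_deriv hh
  set μ₀ : ℝ := ‖deriv h z₀‖ with hμ₀
  have hμ₀0 : 0 < μ₀ := norm_pos_iff.mpr h0
  set d' : ℝ := max d 0 + 1 with hd'
  have hd'0 : 0 < d' := by positivity
  set R : ℝ := 64 * d' / μ₀ with hR
  have hR0 : 0 < R := by positivity
  have hcont : ContinuousOn (fun z => ‖deriv h z‖ * (R - dist z z₀))
      (Metric.closedBall z₀ R) :=
    ((hgd.continuous.norm).mul (continuous_const.sub (continuous_id.dist
      continuous_const))).continuousOn
  obtain ⟨p, hpK, hp⟩ := (isCompact_closedBall z₀ R).exists_isMaxOn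
    ⟨z₀, Metric.mem_closedBall_self hR0.le⟩ hcont
  have hp' : ∀ z ∈ Metric.closedBall z₀ R, ‖deriv h z‖ * (R - dist z z₀) ≤
      ‖deriv h p‖ * (R - dist p z₀) := fun z hz => hp hz
  have hM0 : μ₀ * R ≤ ‖deriv h p‖ * (R - dist p z₀) := by
    have := hp' z₀ (Metric.mem_closedBall_self hR0.le)
    simpa using this
  have hMpos : 0 < ‖deriv h p‖ * (R - dist p z₀) := lt_of_lt_of_le (by positivity) hM0
  set μ : ℝ := ‖deriv h p‖ with hμ
  obtain ⟨hμpos, hRp⟩ : 0 < μ ∧ 0 < R - dist p z₀ := by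
    rcases mul_pos_iff.mp hMpos with ⟨h1, h2⟩ | ⟨h1, h2⟩
    · exact ⟨h1, h2⟩
    · exact absurd h1 (not_lt.mpr (norm_nonneg _))
  set r₀ : ℝ := (R - dist p z₀) / 2 with hr₀
  have hr₀0 : 0 < r₀ := by positivity
  have hbd : ∀ z ∈ Metric.ball p r₀, ‖deriv h z‖ ≤ 2 * μ := by
    intro z hz
    have hzp : dist z p < r₀ := Metric.mem_ball.mp hz
    have hzK : z ∈ Metric.closedBall z₀ R := by
      rw [Metric.mem_closedBall]
      calc dist z z₀ ≤ dist z p + dist p z₀ := dist_triangle _ _ _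
        _ ≤ r₀ + dist p z₀ := by linarith
        _ ≤ R := by rw [hr₀]; linarith
    have hz2 : r₀ ≤ R - dist z z₀ := by
      have : dist z z₀ ≤ dist z p + dist p z₀ := dist_triangle _ _ _
      rw [hr₀]; rw [hr₀] at hzp; linarith
    have hmax := hp' z hzK
    have hpos : 0 < R - dist z z₀ := lt_of_lt_of_le hr₀0 hz2
    -- ‖deriv h z‖ ≤ μ * (2 r₀) / (R - dist z z₀) ≤ 2 μ
    have h1 : ‖deriv h z‖ * (R - dist z z₀) ≤ μ * (2 * r₀) := by
      calc ‖deriv h z‖ * (R - dist z z₀) ≤ μ * (R - dist p z₀) := hmax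
        _ = μ * (2 * r₀) := by rw [hr₀]; ring
    nlinarith [norm_nonneg (deriv h z)]
  have hsub := bloch_key hh hr₀0 rfl hμpos hbd
  refine ⟨h p, le_trans ?_ hsub⟩
  have hrad : d ≤ μ * r₀ / 32 := by
    have : μ₀ * R / 64 ≤ μ * r₀ / 32 := by
      rw [hr₀]; nlinarith
    have hμ₀R : μ₀ * R / 64 = d' := by
      rw [hR]; field_simp
    have hd'd : d ≤ d' := by
      rw [hd']
      have := le_max_left d 0
      linarith
    linarith
  exact Metric.ball_subset_ball hrad
/-- The `m`-th positive "grid abscissa": `arcosh (2m+1)`. -/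
noncomputable def picL (m : ℕ) : ℝ := Real.log (2 * m + 1 + Real.sqrt ((2 * m + 1) ^ 2 - 1))

lemma picU_pos (m : ℕ) : (0:ℝ) < 2 * m + 1 + Real.sqrt ((2 * m + 1) ^ 2 - 1) := by positivity

lemma picU_ge (m : ℕ) : (2 * m + 1 : ℝ) ≤ 2 * m + 1 + Real.sqrt ((2 * m + 1) ^ 2 - 1) := by
  have := Real.sqrt_nonneg ((2 * (m:ℝ) + 1) ^ 2 - 1)
  linarith

lemma picL_nonneg (m : ℕ) : 0 ≤ picL m := by
  refine Real.log_nonneg ?_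
  have := picU_ge m
  have h0 : (0:ℝ) ≤ (m:ℝ) := Nat.cast_nonneg m
  linarith

lemma picL_zero : picL 0 = 0 := by
  have : ((2 * (0:ℕ) + 1 : ℝ)) ^ 2 - 1 = 0 := by norm_num
  simp only [picL, Nat.cast_zero, this]
  norm_num

lemma picL_lb (m : ℕ) : Real.log (2 * m + 1) ≤ picL m :=
  Real.log_le_log (by positivity) (picU_ge m)

lemma picL_gap (m : ℕ) : picL (m + 1) ≤ picL m + Real.log 6 := by
  set M : ℝ := (m : ℝ) with hM
  have hM0 : (0:ℝ) ≤ M := Nat.cast_nonneg m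
  have hcast : ((m + 1 : ℕ) : ℝ) = M + 1 := by push_cast; ring
  have hs1 : Real.sqrt ((2 * (M + 1) + 1) ^ 2 - 1) ≤ 2 * M + 3 := by
    calc Real.sqrt ((2 * (M + 1) + 1) ^ 2 - 1) ≤ Real.sqrt ((2 * M + 3) ^ 2) := by
          apply Real.sqrt_le_sqrt; nlinarith
      _ = 2 * M + 3 := Real.sqrt_sq (by linarith)
  have h1 := Real.sqrt_nonneg ((2 * M + 1) ^ 2 - 1)
  have h2 := Real.sqrt_nonneg ((2 * (M + 1) + 1) ^ 2 - 1)
  have hle : 2 * (M + 1) + 1 + Real.sqrt ((2 * (M + 1) + 1) ^ 2 - 1) ≤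
      6 * (2 * M + 1 + Real.sqrt ((2 * M + 1) ^ 2 - 1)) := by nlinarith
  have hpos : (0:ℝ) < 2 * (M + 1) + 1 + Real.sqrt ((2 * (M + 1) + 1) ^ 2 - 1) := by linarith
  have hkey : picL (m + 1) ≤ Real.log (6 * (2 * M + 1 + Real.sqrt ((2 * M + 1) ^ 2 - 1))) := by
    rw [picL, hcast]
    exact Real.log_le_log hpos hle
  rw [Real.log_mul (by norm_num) (ne_of_gt (picU_pos m))] at hkey
  have h3 : picL m = Real.log (2 * M + 1 + Real.sqrt ((2 * M + 1) ^ 2 - 1)) := rfl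
  linarith

lemma picL_cosh (m : ℕ) : Real.cosh (picL m) = 2 * m + 1 := by
  have hM0 : (0:ℝ) ≤ (m:ℝ) := Nat.cast_nonneg m
  have hsq : Real.sqrt ((2 * m + 1) ^ 2 - 1) ^ 2 = (2 * (m:ℝ) + 1) ^ 2 - 1 := by
    apply Real.sq_sqrt; nlinarith
  have hinv : (2 * m + 1 + Real.sqrt ((2 * m + 1) ^ 2 - 1))⁻¹ =
      2 * m + 1 - Real.sqrt ((2 * m + 1) ^ 2 - 1) := by
    symm
    refine eq_inv_of_mul_eq_one_left ?_
    have hexp : (2 * (m:ℝ) + 1 - Real.sqrt ((2 * m + 1) ^ 2 - 1)) *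
        (2 * (m:ℝ) + 1 + Real.sqrt ((2 * m + 1) ^ 2 - 1)) =
        (2 * (m:ℝ) + 1) ^ 2 - Real.sqrt ((2 * m + 1) ^ 2 - 1) ^ 2 := by ring
    rw [hexp, hsq]
    ring
  rw [Real.cosh_eq, picL, Real.exp_log (picU_pos m), Real.exp_neg,
    Real.exp_log (picU_pos m), hinv]
  ring
lemma log_six_lt_two : Real.log 6 < 2 := by
  have h := Real.exp_one_gt_d9
  have h2 : (6:ℝ) < Real.exp 2 := by
    have he : Real.exp 2 = Real.exp 1 * Real.exp 1 := by
      rw [← Real.exp_add]; norm_num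
    nlinarith
  calc Real.log 6 < Real.log (Real.exp 2) := Real.log_lt_log (by norm_num) h2
    _ = 2 := Real.log_exp 2

lemma grid_dense (w : ℂ) : ∃ (m : ℕ) (j : ℤ) (σ : ℝ), (σ = 1 ∨ σ = -1) ∧
    dist w (↑(σ * picL m) + ↑(Real.pi * j) * Complex.I) < 4 := by
  set x : ℝ := w.re with hx
  set y : ℝ := w.im with hy'
  set j : ℤ := round (y / Real.pi) with hj
  have hπ := Real.pi_pos
  have hy : |y - Real.pi * j| ≤ Real.pi / 2 := by
    have h2 : |y / Real.pi - j| ≤ 1/2 := abs_sub_round (y / Real.pi)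
    have h3 : Real.pi * (y / Real.pi - j) = y - Real.pi * j := by
      field_simp
    rw [← h3, abs_mul, abs_of_pos hπ]
    calc Real.pi * |y / Real.pi - j| ≤ Real.pi * (1/2) :=
        mul_le_mul_of_nonneg_left h2 hπ.le
      _ = Real.pi / 2 := by ring
  have hex : ∃ k : ℕ, |x| < picL (k + 1) := by
    set k : ℕ := ⌈Real.exp |x|⌉₊ with hk
    have h1 : Real.exp |x| ≤ (k : ℝ) := Nat.le_ceil _
    have hk0 : (0:ℝ) ≤ (k:ℝ) := Nat.cast_nonneg k
    have h4 : Real.exp |x| < 2 * (k:ℝ) + 3 := by nlinarith [Real.exp_pos |x|]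
    have h5 : |x| < Real.log (2 * (k:ℝ) + 3) := by
      have := Real.log_lt_log (Real.exp_pos _) h4
      rwa [Real.log_exp] at this
    have h6 : Real.log (2 * (k:ℝ) + 3) = Real.log (2 * ((k + 1 : ℕ) : ℝ) + 1) := by
      push_cast; ring_nf
    exact ⟨k, lt_of_lt_of_le (h6 ▸ h5) (picL_lb (k + 1))⟩
  classical
  set N : ℕ := Nat.find hex with hN
  have hN2 : |x| < picL (N + 1) := Nat.find_spec hex
  have hN1 : picL N ≤ |x| := by
    rcases Nat.eq_zero_or_eq_succ_pred N with h | h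
    · rw [h, picL_zero]; exact abs_nonneg x
    · have hlt : N - 1 < N := by omega
      have := Nat.find_min hex hlt
      have heq : N - 1 + 1 = N := by omega
      rw [heq] at this
      exact not_lt.mp this
  have hxb : |(|x| - picL N)| < 2 := by
    rw [abs_lt]
    constructor
    · linarith
    · have := picL_gap N
      have := log_six_lt_two
      linarith
  set σ : ℝ := if 0 ≤ x then 1 else -1 with hσdef
  have hσ : σ = 1 ∨ σ = -1 := by
    by_cases h : 0 ≤ x
    · left; rw [hσdef, if_pos h]
    · right; rw [hσdef, if_neg h]
  have hxσ : |x - σ * picL N| < 2 := by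
    by_cases h : 0 ≤ x
    · rw [hσdef, if_pos h, one_mul]
      rwa [_root_.abs_of_nonneg h] at hxb
    · rw [hσdef, if_neg h, neg_one_mul, sub_neg_eq_add]
      rw [_root_.abs_of_neg (not_le.mp h)] at hxb
      rw [show x + picL N = -(-x - picL N) by ring, abs_neg]
      exact hxb
  refine ⟨N, j, σ, hσ, ?_⟩
  set t : ℂ := ↑(σ * picL N) + ↑(Real.pi * j) * Complex.I with ht
  have hre : (w - t).re = x - σ * picL N := by
    simp [ht, hx, Complex.sub_re, Complex.add_re, Complex.mul_re]
  have him : (w - t).im = y - Real.pi * j := by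
    simp [ht, hy', Complex.sub_im, Complex.add_im, Complex.mul_im]
  have hd : dist w t = ‖w - t‖ := Complex.dist_eq w t
  have hb := Complex.norm_le_abs_re_add_abs_im (w - t)
  rw [hre, him] at hb
  have hπ4 : Real.pi < 3.15 := Real.pi_lt_d2
  rw [hd]
  calc ‖w - t‖ ≤ |x - σ * picL N| + |y - Real.pi * j| := hb
    _ < 2 + Real.pi / 2 := by
        have := hxσ; have := hy; linarith
    _ < 4 := by linarith

lemma cosh_grid (m : ℕ) (j : ℤ) (σ : ℝ) (hσ : σ = 1 ∨ σ = -1) :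
    Complex.cosh (↑(σ * picL m) + ↑(Real.pi * j) * Complex.I) =
      ((-1) ^ j * (2 * m + 1) : ℂ) := by
  rw [Complex.cosh_add]
  have h1 : Complex.cosh (↑(Real.pi * j) * Complex.I) = (Real.cos (Real.pi * j) : ℂ) := by
    rw [Complex.cosh_mul_I, Complex.ofReal_cos]
  have h2 : Complex.sinh (↑(Real.pi * j) * Complex.I) = 0 := by
    rw [Complex.sinh_mul_I]
    have hs : Real.sin (Real.pi * j) = 0 := by
      rw [mul_comm]; exact Real.sin_int_mul_pi j
    rw [← Complex.ofReal_sin, hs]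
    simp
  have h3 : Complex.cosh ↑(σ * picL m) = ((2 * m + 1 : ℝ) : ℂ) := by
    rcases hσ with h | h <;> rw [h]
    · rw [one_mul, ← Complex.ofReal_cosh, picL_cosh]
    · rw [neg_one_mul, Complex.ofReal_neg, Complex.cosh_neg, ← Complex.ofReal_cosh, picL_cosh]
  have h4 : Real.cos (Real.pi * j) = (-1) ^ j := by
    have := Real.cos_add_int_mul_pi 0 j
    simpa [mul_comm] using this
  rw [h1, h2, h3, h4]
  push_cast
  ring
/-- **Little Picard theorem**: a non-constant entire function omits at most one value,
i.e. the complement of its range contains at most one point. -/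
theorem little_picard (f : ℂ → ℂ) (hf : ∀ z : ℂ, DifferentiableAt ℂ f z)
    (hnc : ¬ ∃ c : ℂ, ∀ z : ℂ, f z = c) :
    Set.Subsingleton (Set.range f)ᶜ := by
  intro a ha b hb
  by_contra hab
  have hfd : Differentiable ℂ f := fun z => hf z
  have hfa : ∀ z, f z ≠ a := fun z h => ha ⟨z, h⟩
  have hfb : ∀ z, f z ≠ b := fun z h => hb ⟨z, h⟩
  have hba : b - a ≠ 0 := sub_ne_zero.mpr (Ne.symm hab)
  set g : ℂ → ℂ := fun z => (f z - a) / (b - a) with hgdef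
  have hgd : Differentiable ℂ g := (hfd.sub_const a).div_const (b - a)
  have hg0 : ∀ z, g z ≠ 0 := fun z => div_ne_zero (sub_ne_zero.mpr (hfa z)) hba
  have hgone : ∀ z, g z ≠ 1 := by
    intro z h
    have h2 : f z - a = b - a := (div_eq_one_iff_eq hba).mp h
    exact hfb z (by linear_combination h2)
  obtain ⟨v, hvd, hv⟩ := entire_exists_log hgd hg0
  have h2πI : (2 * (Real.pi:ℂ) * Complex.I) ≠ 0 := by
    simp [Real.pi_ne_zero, Complex.I_ne_zero]
  set g1 : ℂ → ℂ := fun z => v z / (2 * Real.pi * Complex.I) with hg1def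
  have hg1d : Differentiable ℂ g1 := hvd.div_const _
  have hint : ∀ z : ℂ, ∀ n : ℤ, g1 z ≠ (n:ℂ) := by
    intro z n h
    have hvz : v z = n * (2 * Real.pi * Complex.I) := by
      rw [hg1def] at h
      field_simp at h
      linear_combination h
    have hgz : g z = 1 := by
      rw [hv z, hvz]
      exact Complex.exp_int_mul_two_pi_mul_I n
    exact hgone z hgz
  obtain ⟨A, hAd, hA⟩ := entire_exists_sqrt hg1d (fun z => by simpa using hint z 0)
  have hg1m1 : ∀ z, g1 z - 1 ≠ 0 := by
    intro z h
    rw [sub_eq_zero] at h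
    exact hint z 1 (by simpa using h)
  obtain ⟨B, hBd, hB⟩ := entire_exists_sqrt (hg1d.sub_const 1) hg1m1
  set s : ℂ → ℂ := fun z => A z - B z with hsdef
  have hsd : Differentiable ℂ s := hAd.sub hBd
  have hmul : ∀ z, s z * (A z + B z) = 1 := by
    intro z
    rw [hsdef]
    have h1 := hA z
    have h2 := hB z
    linear_combination h1 - h2
  have hs0 : ∀ z, s z ≠ 0 := fun z h => by simpa [h] using hmul z
  obtain ⟨h, hhd, hh⟩ := entire_exists_log hsd hs0
  have hcosh : ∀ z, Complex.cosh (2 * h z) = 2 * g1 z - 1 := by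
    intro z
    have hexp : Complex.exp (h z) = s z := (hh z).symm
    have hexpneg : Complex.exp (-h z) = A z + B z := by
      rw [Complex.exp_neg, hexp]
      field_simp [hs0 z]
      linear_combination - hmul z
    have hch : Complex.cosh (h z) = A z := by
      unfold Complex.cosh
      rw [hexp, hexpneg, hsdef]
      ring
    have hsh : Complex.sinh (h z) ^ 2 = Complex.cosh (h z) ^ 2 - 1 := by
      linear_combination - Complex.cosh_sq_sub_sinh_sq (h z)
    rw [Complex.cosh_two_mul, hsh, hch, hA z]
    ring
  set H : ℂ → ℂ := fun z => 2 * h z with hHdef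
  have hHd : Differentiable ℂ H := hhd.const_mul 2
  have hHnc : ∃ z₀, deriv H z₀ ≠ 0 := by
    by_contra hc
    push_neg at hc
    have hconst : ∀ z, H z = H 0 := fun z => is_const_of_deriv_eq_zero hHd hc z 0
    have hg1c : ∀ z, g1 z = g1 0 := by
      intro z
      have h1 := hcosh z
      have h2 := hcosh 0
      have h3 : Complex.cosh (2 * h z) = Complex.cosh (2 * h 0) := by
        have := hconst z
        rw [hHdef] at this
        simpa using congrArg Complex.cosh this
      rw [h1, h2] at h3
      linear_combination h3 / 2
    have hfz : ∀ w, f w = a + (b - a) * Complex.exp (2 * Real.pi * Complex.I * g1 w) := by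
      intro w
      have hvw : v w = 2 * Real.pi * Complex.I * g1 w := by
        rw [hg1def]
        field_simp
      rw [← hvw, ← hv w, hgdef]
      field_simp
      ring
    refine hnc ⟨f 0, fun z => ?_⟩
    rw [hfz z, hfz 0, hg1c z]
  obtain ⟨z₀, hz₀⟩ := hHnc
  obtain ⟨c, hc⟩ := bloch_big hHd hz₀ 4
  obtain ⟨m, j, σ, hσ, hdist⟩ := grid_dense c
  have htmem : (↑(σ * picL m) + ↑(Real.pi * j) * Complex.I) ∈ Metric.ball c 4 := by
    rw [Metric.mem_ball, dist_comm]
    exact hdist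
  obtain ⟨z, hz⟩ := hc htmem
  have h1 : Complex.cosh (H z) = ((-1) ^ j * (2 * m + 1) : ℂ) := by
    rw [hz]
    exact cosh_grid m j σ hσ
  have h2 : Complex.cosh (H z) = 2 * g1 z - 1 := hcosh z
  rcases Int.even_or_odd j with he | ho
  · have hpow : ((-1 : ℂ)) ^ j = 1 := he.neg_one_zpow
    rw [hpow] at h1
    refine hint z ((m : ℤ) + 1) ?_
    push_cast
    rw [h2] at h1
    linear_combination h1 / 2
  · have hpow : ((-1 : ℂ)) ^ j = -1 := ho.neg_one_zpow
    rw [hpow] at h1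
    refine hint z (-(m : ℤ)) ?_
    push_cast
    rw [h2] at h1
    linear_combination h1 / 2
end

section
/- (Valiron's theorem.) Let f : ℂ → ℂ be a non-constant entire function. Then for every R > 0 there exist a point c ∈ ℂ and a holomorphic function g : D(c,R) → ℂ defined on the open disk D(c,R) of radius R centered at c such that f(g(w)) = w for every w ∈ D(c,R). That is, f has holomorphic branches of the inverse in arbitrarily large Euclidean disks. -/
open Metric Set

/-- The operator norm of a continuous linear map `ℂ →L[ℂ] ℂ` equals the norm of its value at 1. -/
lemma valiron_clm_norm_eq (T : ℂ →L[ℂ] ℂ) : ‖T‖ = ‖T 1‖ := by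
  apply le_antisymm
  · refine ContinuousLinearMap.opNorm_le_bound T (norm_nonneg _) (fun x => ?_)
    have : T x = x • T 1 := by
      rw [← T.map_smul]; congr 1; simp
    rw [this, norm_smul, mul_comm]
  · simpa using T.le_opNorm 1

/-- **Valiron's theorem**: a non-constant entire function has holomorphic branches of the
inverse in arbitrarily large Euclidean disks: for every `R > 0` there are `c : ℂ` and a
holomorphic `g` on the disk `D(c, R)` with `f (g w) = w` on that disk. -/
theorem valiron (f : ℂ → ℂ) (hf : ∀ z : ℂ, DifferentiableAt ℂ f z)
    (hnc : ¬ ∃ c : ℂ, ∀ z : ℂ, f z = c) :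
    ∀ R : ℝ, 0 < R → ∃ (c : ℂ) (g : ℂ → ℂ),
      DifferentiableOn ℂ g (Metric.ball c R) ∧
      ∀ w ∈ Metric.ball c R, f (g w) = w := by
  intro R hR
  have hfd : Differentiable ℂ f := fun z => hf z
  have h1 : AnalyticOnNhd ℂ (deriv f) univ := (Complex.analyticOnNhd_univ_iff_differentiable.2 hfd).deriv
  have hfd' : Differentiable ℂ (deriv f) := fun z => (h1 z (mem_univ z)).differentiableAt
  -- a point where the derivative doesn't vanish
  obtain ⟨z1, hz1⟩ : ∃ z1, deriv f z1 ≠ 0 := by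
    by_contra h; push_neg at h
    exact hnc ⟨f 0, fun z => is_const_of_deriv_eq_zero hfd h z 0⟩
  set M1 : ℝ := ‖deriv f z1‖ with hM1def
  have hM1 : 0 < M1 := norm_pos_iff.2 hz1
  set R' : ℝ := 64 * (R + 1) / M1 with hR'def
  have hR' : 0 < R' := by positivity
  -- maximize (R' - dist z z1) * ‖deriv f z‖ on the closed ball
  have hcont : ContinuousOn (fun z => (R' - dist z z1) * ‖deriv f z‖) (closedBall z1 R') :=
    Continuous.continuousOn (by have := hfd'.continuous; fun_prop)
  obtain ⟨z0, hz0mem, hz0max⟩ :=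
    (isCompact_closedBall z1 R').exists_isMaxOn ⟨z1, mem_closedBall_self hR'.le⟩ hcont
  set M0 : ℝ := ‖deriv f z0‖ with hM0def
  set ρ : ℝ := (R' - dist z0 z1) / 2 with hρdef
  have hz0v : R' * M1 ≤ (R' - dist z0 z1) * M0 := by
    have := hz0max (mem_closedBall_self hR'.le)
    simpa [dist_self] using this
  have hdistz0 : dist z0 z1 ≤ R' := mem_closedBall.1 hz0mem
  have hM0pos : 0 < M0 := by nlinarith [norm_nonneg (deriv f z0), mul_pos hR' hM1]
  have hρpos : 0 < ρ := by nlinarith [mul_pos hR' hM1]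
  have hprod : R' * M1 ≤ 2 * ρ * M0 := by rw [hρdef]; linarith [hz0v]
  -- bound on the derivative on ball z0 ρ
  have hbound : ∀ z ∈ ball z0 ρ, ‖deriv f z‖ ≤ 2 * M0 := by
    intro z hz
    have hd1 : dist z z1 ≤ R' - ρ := by
      calc dist z z1 ≤ dist z z0 + dist z0 z1 := dist_triangle _ _ _
        _ ≤ ρ + (R' - 2 * ρ) := by
            have h := (mem_ball.1 hz).le
            linarith
        _ = R' - ρ := by ring
    have hzmem : z ∈ closedBall z1 R' := mem_closedBall.2 (by linarith)
    have hu := hz0max hzmem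
    simp only at hu
    have h2 : (R' - dist z z1) * ‖deriv f z‖ ≤ 2 * ρ * M0 := by
      have heq : 2 * ρ * M0 = (R' - dist z0 z1) * ‖deriv f z0‖ := by
        rw [hρdef, hM0def]; ring
      rw [heq]; exact hu
    nlinarith [norm_nonneg (deriv f z)]
  -- Schwarz lemma for deriv f on ball z0 ρ
  have hmaps : MapsTo (deriv f) (ball z0 ρ) (ball (deriv f z0) (4 * M0)) := by
    intro z hz
    have := hbound z hz
    have : dist (deriv f z) (deriv f z0) ≤ 3 * M0 := by
      rw [dist_eq_norm]
      calc ‖deriv f z - deriv f z0‖ ≤ ‖deriv f z‖ + ‖deriv f z0‖ := norm_sub_le _ _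
        _ ≤ 3 * M0 := by linarith [hM0def.le, hM0def.ge]
    exact mem_ball.2 (by linarith)
  set r : ℝ := ρ / 8 with hrdef
  have hrpos : 0 < r := by positivity
  have hschwarz : ∀ z ∈ ball z0 r, ‖deriv f z - deriv f z0‖ ≤ M0 / 2 := by
    intro z hz
    have hz' : z ∈ ball z0 ρ := ball_subset_ball (by rw [hrdef]; linarith) hz
    have := Complex.dist_le_div_mul_dist_of_mapsTo_ball
      (hfd'.differentiableOn) (hmaps.mono_right ball_subset_closedBall) hz'
    rw [← dist_eq_norm]
    calc dist (deriv f z) (deriv f z0) ≤ 4 * M0 / ρ * dist z z0 := this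
      _ ≤ 4 * M0 / ρ * r := by
          have : dist z z0 ≤ r := (mem_ball.1 hz).le
          have h4 : 0 ≤ 4 * M0 / ρ := by positivity
          exact mul_le_mul_of_nonneg_left this h4
      _ = M0 / 2 := by rw [hrdef]; field_simp; ring
  -- the linear approximation
  set m : ℂ := deriv f z0 with hmdef
  have hm : m ≠ 0 := by
    have h := hM0pos; rw [hM0def] at h; exact norm_pos_iff.1 h
  set L : ℂ ≃L[ℂ] ℂ := ContinuousLinearEquiv.unitsEquivAut ℂ (Units.mk0 m hm) with hLdef
  have hL1 : (L : ℂ →L[ℂ] ℂ) 1 = m := by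
    simp [hLdef, ContinuousLinearEquiv.unitsEquivAut_apply]
  have hLsymm1 : (L.symm : ℂ →L[ℂ] ℂ) 1 = m⁻¹ := by
    simp [hLdef, ContinuousLinearEquiv.unitsEquivAut_apply_symm]
  set cc : NNReal := ‖m‖₊ / 2 with hccdef
  have hA : ApproximatesLinearOn f (L : ℂ →L[ℂ] ℂ) (ball z0 r) cc := by
    intro x hx y hy
    have := Convex.norm_image_sub_le_of_norm_hasFDerivWithin_le'
      (f := f) (f' := fun z => fderiv ℂ f z) (φ := (L : ℂ →L[ℂ] ℂ)) (C := M0 / 2)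
      (fun z _ => (hfd z).hasFDerivAt.hasFDerivWithinAt)
      (fun z hz => by
        rw [valiron_clm_norm_eq]
        simp only [ContinuousLinearMap.sub_apply, fderiv_apply_one_eq_deriv, hL1]
        exact hschwarz z hz)
      (convex_ball z0 r) hy hx
    have hcc : (cc : ℝ) = M0 / 2 := by
      rw [hccdef]; push_cast; rw [hM0def]
    rw [hcc]
    exact this
  have hNval : (‖((L.symm : ℂ →L[ℂ] ℂ))‖₊ : NNReal) = ‖m‖₊⁻¹ := by
    ext
    rw [coe_nnnorm, valiron_clm_norm_eq, hLsymm1]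
    simp
  have hmnn : (0 : NNReal) < ‖m‖₊ := by
    rw [pos_iff_ne_zero]; simpa using hm
  have hc : cc < (‖((L.symm : ℂ →L[ℂ] ℂ))‖₊)⁻¹ := by
    rw [hNval, inv_inv, hccdef]
    exact NNReal.half_lt_self hmnn.ne'
  have hcor : Subsingleton ℂ ∨ cc < (‖((L.symm : ℂ →L[ℂ] ℂ))‖₊)⁻¹ := Or.inr hc
  set e := hA.toOpenPartialHomeomorph f (ball z0 r) hcor isOpen_ball with hedef
  -- target contains a large closed ball
  have hsub : closedBall z0 (r / 2) ⊆ ball z0 r := by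
    intro x hx
    exact mem_ball.2 (lt_of_le_of_lt (mem_closedBall.1 hx) (by linarith))
  have htarget := hA.closedBall_subset_target hcor isOpen_ball (by positivity : (0:ℝ) ≤ r / 2) hsub
  have hradius : R + 1 ≤ (((‖((L.symm : ℂ →L[ℂ] ℂ))‖₊)⁻¹ : NNReal) - (cc : ℝ)) * (r / 2) := by
    have hcoe : ((((‖((L.symm : ℂ →L[ℂ] ℂ))‖₊)⁻¹ : NNReal)) - (cc : ℝ) : ℝ) = M0 - M0 / 2 := by
      rw [hNval, inv_inv, hccdef]
      push_cast
      rw [hM0def]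
    rw [hcoe]
    have h64 : 64 * (R + 1) ≤ 2 * ρ * M0 := by
      have : R' * M1 = 64 * (R + 1) := by
        rw [hR'def]; field_simp
      linarith [hprod, this.symm.le]
    rw [hrdef]
    nlinarith
  have hball_target : ball (f z0) R ⊆ e.target := by
    intro w hw
    apply htarget
    exact mem_closedBall.2 (by linarith [(mem_ball.1 hw).le])
  -- conclusion
  refine ⟨f z0, e.symm, ?_, ?_⟩
  · intro w hw
    have hwt : w ∈ e.target := hball_target hw
    have hgw : e.symm w ∈ ball z0 r := e.map_target hwt
    have hgderiv : deriv f (e.symm w) ≠ 0 := by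
      intro h0
      have := hschwarz (e.symm w) hgw
      rw [h0] at this
      simp only [zero_sub, norm_neg] at this
      rw [← hM0def] at this
      linarith
    have hcont : ContinuousAt e.symm w := by
      apply e.continuousAt_symm hwt
    have heve : ∀ᶠ z in nhds w, f (e.symm z) = z := by
      refine Filter.eventually_of_mem (isOpen_ball.mem_nhds hw) (fun z hz => ?_)
      have : z ∈ e.target := hball_target hz
      exact e.right_inv this
    have hder := HasDerivAt.of_local_left_inverse hcont
      ((hfd (e.symm w)).hasDerivAt) hgderiv heve
    exact hder.differentiableAt.differentiableWithinAt
  · intro w hw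
    exact e.right_inv (hball_target hw)
end

section
/- (Key comparison step in Ahlfors' proof.) Let u : 𝔻 → ℝ be twice continuously differentiable on the open unit disk and suppose Δu(z) ≥ 4·e^{2u(z)} for all z ∈ 𝔻, where Δ is the standard Laplacian on ℝ² ≅ ℂ. Then for every R ∈ (0,1) and every z with |z| < R, one has e^{u(z)} ≤ R/(R² − |z|²). -/
/-!
The function `F w = (R² - |w|²) e^{u w}` is continuous on the closed disk of radius `R`, vanishes
on its boundary and is positive at `0`, so it attains its maximum at an interior point `z₀`.
There `log F = u + log (R² - |w|²)` has a local maximum, hence a nonpositive Laplacian. Since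
`Δ log (R² - |w|²) = -4R² / (R² - |w|²)²`, the curvature hypothesis gives
`4 e^{2u(z₀)} ≤ Δu(z₀) ≤ 4R² / (R² - |z₀|²)²`, that is `F z₀ ≤ R`, and so `F ≤ R` on the disk.
-/

open Complex

/-- The standard Laplacian on `ℝ² ≅ ℂ`: `Δu = ∂²u/∂x² + ∂²u/∂y²`, written as the sum of
second directional derivatives in the directions `1` and `i`. -/
noncomputable def laplacian (u : ℂ → ℝ) (z : ℂ) : ℝ :=
  fderiv ℝ (fun w : ℂ => fderiv ℝ u w 1) z 1 +
    fderiv ℝ (fun w : ℂ => fderiv ℝ u w Complex.I) z Complex.I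

open Filter Metric Topology
open scoped Laplacian

theorem IsLocalMax.deriv_deriv_nonpos {f : ℝ → ℝ} {a : ℝ} (h : IsLocalMax f a)
    (hc : ContinuousAt f a) : deriv (deriv f) a ≤ 0 := by
  by_contra! hpos
  -- by the second derivative test `a` is also a local minimum, so `f` is locally constant
  have hmin : IsLocalMin f a := isLocalMin_of_deriv_deriv_pos hpos h.deriv_eq_zero hc
  have hconst : f =ᶠ[𝓝 a] fun _ => f a :=
    (hmin.and h).mono fun _ hx => le_antisymm hx.2 hx.1
  rw [hconst.deriv.deriv_eq, deriv_const', deriv_const] at hpos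
  exact hpos.false

theorem deriv_deriv_comp_const_add {𝕜 F : Type*} [NontriviallyNormedField 𝕜]
    [NormedAddCommGroup F] [NormedSpace 𝕜 F] (f : 𝕜 → F) (a x : 𝕜) :
    deriv (deriv fun t => f (a + t)) x = deriv (deriv f) (a + x) := by
  simpa [iteratedDeriv_succ] using congrFun (iteratedDeriv_comp_const_add 2 f a) x

theorem deriv_deriv_log_sub_sq {c x : ℝ} (hx : x ^ 2 < c) :
    deriv (deriv fun t => Real.log (c - t ^ 2)) x = -2 * (c + x ^ 2) / (c - x ^ 2) ^ 2 := by
  have hpos : ∀ᶠ t in 𝓝 x, 0 < c - t ^ 2 :=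
    (by fun_prop : Continuous fun t : ℝ => c - t ^ 2).continuousAt.eventually
      (eventually_gt_nhds (sub_pos.2 hx))
  have hderiv : deriv (fun t => Real.log (c - t ^ 2)) =ᶠ[𝓝 x] fun t => -(2 * t) / (c - t ^ 2) := by
    filter_upwards [hpos] with t ht
    rw [(((hasDerivAt_pow 2 t).const_sub c).log ht.ne').deriv]
    ring
  have hquot := ((hasDerivAt_id' x).const_mul 2).fun_neg.fun_div
    ((hasDerivAt_pow 2 x).const_sub c) (sub_pos.2 hx).ne'
  rw [hderiv.deriv_eq, hquot.deriv]
  field_simp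
  ring

theorem ContDiffAt.fderiv_fderiv_apply {𝕜 E F : Type*} [NontriviallyNormedField 𝕜]
    [NormedAddCommGroup E] [NormedSpace 𝕜 E] [NormedAddCommGroup F] [NormedSpace 𝕜 F]
    {f : E → F} {x : E} (hf : ContDiffAt 𝕜 2 f x) (v w : E) :
    fderiv 𝕜 (fun y => fderiv 𝕜 f y v) x w = iteratedFDeriv 𝕜 2 f x ![w, v] := by
  have hdf : DifferentiableAt 𝕜 (fderiv 𝕜 f) x :=
    (hf.fderiv_right one_add_one_eq_two.le).differentiableAt one_ne_zero
  rw [fderiv_clm_apply hdf (differentiableAt_const v), iteratedFDeriv_two_apply]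
  simp

section Line

variable {E F : Type*} [NormedAddCommGroup E] [NormedSpace ℝ E]
  [NormedAddCommGroup F] [NormedSpace ℝ F]

theorem ContDiffAt.deriv_deriv_comp_line {f : E → F} {x : E} (hf : ContDiffAt ℝ 2 f x) (v : E) :
    deriv (deriv fun t : ℝ => f (x + t • v)) 0 = iteratedFDeriv ℝ 2 f x ![v, v] := by
  have hline : ∀ t : ℝ, HasDerivAt (fun s : ℝ => x + s • v) v t := fun t => by
    simpa using ((hasDerivAt_id t).smul_const v).const_add x
  have hnear : ∀ᶠ t in 𝓝 (0 : ℝ), ContDiffAt ℝ 2 f (x + t • v) :=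
    (hline 0).continuousAt.eventually (by simpa using hf.eventually (by simp))
  have hderiv : deriv (fun t : ℝ => f (x + t • v)) =ᶠ[𝓝 0] fun t => fderiv ℝ f (x + t • v) v := by
    filter_upwards [hnear] with t ht
    exact ((ht.differentiableAt two_ne_zero).hasFDerivAt.comp_hasDerivAt t (hline t)).deriv
  have hdiff : DifferentiableAt ℝ (fun y => fderiv ℝ f y v) x :=
    ((hf.fderiv_right one_add_one_eq_two.le).clm_apply contDiffAt_const).differentiableAt
      one_ne_zero
  rw [hderiv.deriv_eq]
  change lineDeriv ℝ (fun y => fderiv ℝ f y v) x v = _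
  rw [hdiff.lineDeriv_eq_fderiv, hf.fderiv_fderiv_apply]

theorem IsLocalMax.iteratedFDeriv_two_nonpos {f : E → ℝ} {x : E} (h : IsLocalMax f x)
    (hf : ContDiffAt ℝ 2 f x) (v : E) : iteratedFDeriv ℝ 2 f x ![v, v] ≤ 0 := by
  have hline : Continuous fun t : ℝ => x + t • v := by fun_prop
  rw [← hf.deriv_deriv_comp_line]
  refine IsLocalMax.deriv_deriv_nonpos (IsLocalMax.comp_continuous ?_ hline.continuousAt)
    (hf.continuousAt.comp_of_eq hline.continuousAt (by simp))
  simpa using h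

end Line

theorem IsLocalMax.laplacian_nonpos {E : Type*} [NormedAddCommGroup E] [InnerProductSpace ℝ E]
    [FiniteDimensional ℝ E] {f : E → ℝ} {x : E} (h : IsLocalMax f x) (hf : ContDiffAt ℝ 2 f x) :
    Δ f x ≤ 0 := by
  rw [InnerProductSpace.laplacian_eq_iteratedFDeriv_stdOrthonormalBasis]
  exact Finset.sum_nonpos fun i _ => h.iteratedFDeriv_two_nonpos hf _

theorem ContDiffAt.laplacian_eq_laplacian {u : ℂ → ℝ} {z : ℂ} (hu : ContDiffAt ℝ 2 u z) :
    laplacian u z = Δ u z := by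
  rw [laplacian, InnerProductSpace.laplacian_eq_iteratedFDeriv_complexPlane,
    hu.fderiv_fderiv_apply, hu.fderiv_fderiv_apply]

theorem laplacian_log_sub_sq_norm {R : ℝ} {z : ℂ} (hz : ‖z‖ < R) :
    Δ (fun w : ℂ => Real.log (R ^ 2 - ‖w‖ ^ 2)) z = -4 * R ^ 2 / (R ^ 2 - ‖z‖ ^ 2) ^ 2 := by
  have hD : 0 < R ^ 2 - ‖z‖ ^ 2 := by nlinarith [norm_nonneg z]
  have hsmooth : ContDiffAt ℝ 2 (fun w : ℂ => Real.log (R ^ 2 - ‖w‖ ^ 2)) z :=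
    (contDiffAt_const.sub (contDiff_norm_sq ℝ).contDiffAt).log hD.ne'
  have hnorm : ‖z‖ ^ 2 = z.re ^ 2 + z.im ^ 2 := by rw [Complex.sq_norm, normSq_apply]; ring
  have hre : (fun t : ℝ => Real.log (R ^ 2 - ‖z + t • (1 : ℂ)‖ ^ 2))
      = fun t => Real.log ((R ^ 2 - z.im ^ 2) - (z.re + t) ^ 2) := by
    funext t
    simp only [Complex.sq_norm, normSq_apply, real_smul, mul_one, add_re, ofReal_re, add_im,
      ofReal_im, add_zero]
    ring_nf
  have him : (fun t : ℝ => Real.log (R ^ 2 - ‖z + t • I‖ ^ 2))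
      = fun t => Real.log ((R ^ 2 - z.re ^ 2) - (z.im + t) ^ 2) := by
    funext t
    simp only [Complex.sq_norm, normSq_apply, real_smul, add_re, mul_re, ofReal_re, I_re, mul_zero,
      ofReal_im, I_im, mul_one, sub_self, add_zero, add_im, mul_im]
    ring_nf
  have hre' : R ^ 2 - z.im ^ 2 - z.re ^ 2 = R ^ 2 - ‖z‖ ^ 2 := by rw [hnorm]; ring
  have him' : R ^ 2 - z.re ^ 2 - z.im ^ 2 = R ^ 2 - ‖z‖ ^ 2 := by rw [hnorm]; ring
  rw [InnerProductSpace.laplacian_eq_iteratedFDeriv_complexPlane]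
  dsimp only
  rw [← hsmooth.deriv_deriv_comp_line, ← hsmooth.deriv_deriv_comp_line, hre, him,
    deriv_deriv_comp_const_add (fun s => Real.log (R ^ 2 - z.im ^ 2 - s ^ 2)),
    deriv_deriv_comp_const_add (fun s => Real.log (R ^ 2 - z.re ^ 2 - s ^ 2)), add_zero, add_zero,
    deriv_deriv_log_sub_sq (by nlinarith), deriv_deriv_log_sub_sq (by nlinarith), hre', him']
  ring

theorem exists_mem_ball_isMaxOn {α β : Type*} [PseudoMetricSpace α] [ProperSpace α]
    [LinearOrder β] [TopologicalSpace β] [ClosedIciTopology β] {f : α → β} {c x : α} {r : ℝ}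
    (hf : ContinuousOn f (closedBall c r)) (hx : x ∈ closedBall c r)
    (hlt : ∀ y ∈ sphere c r, f y < f x) : ∃ z ∈ ball c r, IsMaxOn f (closedBall c r) z := by
  obtain ⟨z, hz, hmax⟩ := (isCompact_closedBall c r).exists_isMaxOn ⟨x, hx⟩ hf
  refine ⟨z, ?_, hmax⟩
  rw [← closedBall_sdiff_sphere]
  exact ⟨hz, fun hzs => (hlt z hzs).not_ge (hmax hx)⟩

theorem sub_sq_norm_mul_exp_le_of_isLocalMax {u : ℂ → ℝ} {R : ℝ} {z : ℂ} (hz : ‖z‖ < R)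
    (hu : ContDiffAt ℝ 2 u z) (hcurv : 4 * Real.exp (2 * u z) ≤ Δ u z)
    (hmax : IsLocalMax (fun w => (R ^ 2 - ‖w‖ ^ 2) * Real.exp (u w)) z) :
    (R ^ 2 - ‖z‖ ^ 2) * Real.exp (u z) ≤ R := by
  set g : ℂ → ℝ := fun w => Real.log (R ^ 2 - ‖w‖ ^ 2)
  have hD : 0 < R ^ 2 - ‖z‖ ^ 2 := by nlinarith [norm_nonneg z]
  have hg : ContDiffAt ℝ 2 g z :=
    (contDiffAt_const.sub (contDiff_norm_sq ℝ).contDiffAt).log hD.ne'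
  have hpos : ∀ᶠ w in 𝓝 z, 0 < R ^ 2 - ‖w‖ ^ 2 :=
    (by fun_prop : Continuous fun w : ℂ => R ^ 2 - ‖w‖ ^ 2).continuousAt.eventually
      (eventually_gt_nhds hD)
  have hlog : ∀ w, 0 < R ^ 2 - ‖w‖ ^ 2 →
      (u + g) w = Real.log ((R ^ 2 - ‖w‖ ^ 2) * Real.exp (u w)) := fun w hw => by
    rw [Real.log_mul hw.ne' (Real.exp_pos _).ne', Real.log_exp, Pi.add_apply, add_comm]
  have hmax_log : IsLocalMax (u + g) z := by
    filter_upwards [hmax, hpos] with w hw hw'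
    rw [hlog w hw', hlog z hD]
    exact Real.log_le_log (by positivity) hw
  have hlap : Δ u z ≤ 4 * (R ^ 2 / (R ^ 2 - ‖z‖ ^ 2) ^ 2) := by
    have := hmax_log.laplacian_nonpos (hu.add hg)
    rw [hu.laplacian_add hg, laplacian_log_sub_sq_norm hz, neg_mul, neg_div, mul_div_assoc] at this
    linarith
  have hsq : ((R ^ 2 - ‖z‖ ^ 2) * Real.exp (u z)) ^ 2 ≤ R ^ 2 := by
    rw [mul_pow, ← Real.exp_nat_mul, ← le_div_iff₀' (by positivity)]
    push_cast
    linarith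
  exact (pow_le_pow_iff_left₀ (by positivity) (by linarith [norm_nonneg z]) two_ne_zero).1 hsq

/-- Key comparison step in Ahlfors' proof: if `u` is C² on the unit disk and
`Δu ≥ 4·e^{2u}` (i.e. the conformal metric `e^u|dz|` has curvature `≤ -1`), then `e^{u(z)}`
is dominated by the density `R/(R² - |z|²)` of the Poincaré metric of `D(0,R)`. -/
theorem ahlfors_comparison (u : ℂ → ℝ)
    (hu : ContDiffOn ℝ 2 u (Metric.ball (0 : ℂ) 1))
    (hcurv : ∀ z ∈ Metric.ball (0 : ℂ) 1, 4 * Real.exp (2 * u z) ≤ laplacian u z) :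
    ∀ R : ℝ, R ∈ Set.Ioo (0 : ℝ) 1 → ∀ z : ℂ, ‖z‖ < R →
      Real.exp (u z) ≤ R / (R ^ 2 - ‖z‖ ^ 2) := by
  rintro R ⟨hR0, hR1⟩ z hz
  set F : ℂ → ℝ := fun w => (R ^ 2 - ‖w‖ ^ 2) * Real.exp (u w)
  have hsub : closedBall (0 : ℂ) R ⊆ ball 0 1 := closedBall_subset_ball hR1
  have hF : ContinuousOn F (closedBall 0 R) :=
    (by fun_prop : Continuous fun w : ℂ => R ^ 2 - ‖w‖ ^ 2).continuousOn.mul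
      (hu.continuousOn.mono hsub).rexp
  have hboundary : ∀ w ∈ sphere (0 : ℂ) R, F w < F 0 := fun w hw => by
    simp only [F, mem_sphere_zero_iff_norm.1 hw, sub_self, zero_mul, norm_zero]
    exact mul_pos (by simpa using pow_pos hR0 2) (Real.exp_pos _)
  obtain ⟨z₀, hz₀, hmax⟩ := exists_mem_ball_isMaxOn hF (mem_closedBall_self hR0.le) hboundary
  have hz₀1 : z₀ ∈ ball (0 : ℂ) 1 := hsub (ball_subset_closedBall hz₀)
  have hu₀ : ContDiffAt ℝ 2 u z₀ := hu.contDiffAt (isOpen_ball.mem_nhds hz₀1)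
  have hFz₀ : F z₀ ≤ R :=
    sub_sq_norm_mul_exp_le_of_isLocalMax (mem_ball_zero_iff.1 hz₀) hu₀
      (hu₀.laplacian_eq_laplacian ▸ hcurv z₀ hz₀1)
      (hmax.isLocalMax (closedBall_mem_nhds_of_mem hz₀))
  have hD : 0 < R ^ 2 - ‖z‖ ^ 2 := by nlinarith [norm_nonneg z]
  rw [le_div_iff₀ hD, mul_comm]
  exact (hmax (mem_closedBall_zero_iff.2 hz.le)).trans hFz₀
end
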